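/- The monoid M presented by ⟨x, y, e | e³ = e, xey = y, xe²y = x, xy = 1⟩ is simple: for every pair of elements a, b ∈ M there exist p, q ∈ M such that p·a·q = b. In particular, every element of M is J-related to the identity 1. -/

import Mathlib

/-- The alphabet `A = {x, y, e}`. -/
inductive Alpha : Type
  | x | y | e
  deriving DecidableEq

/-- The defining relations `e³ = e`, `xey = y`, `xe²y = x`, `xy = 1`. -/
def rel : FreeMonoid Alpha → FreeMonoid Alpha → Prop := fun a b =>
  (a = .of .e * .of .e * .of .e ∧ b = .of .e) ∨
  (a = .of .x * .of .e * .of .y ∧ b = .of .y) ∨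
  (a = .of .x * .of .e * .of .e * .of .y ∧ b = .of .x) ∨
  (a = .of .x * .of .y ∧ b = 1)

/-- The monoid `M = ⟨x, y, e | e³ = e, xey = y, xe²y = x, xy = 1⟩`. -/
abbrev M := PresentedMonoid rel

/-- The image of `x` in `M`. -/
def X : M := PresentedMonoid.of rel .x
/-- The image of `y` in `M`. -/
def Y : M := PresentedMonoid.of rel .y
/-- The image of `e` in `M`. -/
def E : M := PresentedMonoid.of rel .e

/-!
Say that `x, y` cancel `m` if `x ^ a * m * y ^ b = 1` for some `a, b`. When `x * y = 1` this is
unchanged by `m ↦ x * m` and `m ↦ m * y`. Every word is cancelled, by induction on its length: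
look at the letters in front of its first `y` (or at its end, if it has no `y`). If they end with
`x`, `xe`, `xee` or `eee`, a defining relation, possibly after multiplying by `y` on the right,
turns the word into a shorter one. Otherwise the word is `e^k y t`, or `e^k` extended by `y` on
the right, with `k ≤ 2`; multiplying by `x` on the left and using `x e^k y ∈ {1, y, x}` reduces
it to `t` (resp. the empty word).
-/

section IsCancelledBy

variable {N : Type*} [Monoid N] {x y m : N}

def IsCancelledBy (x y m : N) : Prop := ∃ a b : ℕ, x ^ a * m * y ^ b = 1

theorem isCancelledBy_one : IsCancelledBy x y 1 := ⟨0, 0, by simp⟩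

theorem isCancelledBy_x_mul_iff (h : x * y = 1) :
    IsCancelledBy x y (x * m) ↔ IsCancelledBy x y m := by
  constructor
  · rintro ⟨a, b, hab⟩
    exact ⟨a + 1, b, by rwa [pow_succ, mul_assoc (x ^ a)]⟩
  · rintro ⟨_ | a, b, hab⟩
    · refine ⟨0, b + 1, ?_⟩
      rw [pow_zero, one_mul] at hab ⊢
      rw [pow_succ, ← mul_assoc, mul_assoc x, hab, mul_one, h]
    · exact ⟨a, b, by rwa [pow_succ, mul_assoc (x ^ a)] at hab⟩

theorem isCancelledBy_mul_y_iff (h : x * y = 1) :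
    IsCancelledBy x y (m * y) ↔ IsCancelledBy x y m := by
  constructor
  · rintro ⟨a, b, hab⟩
    exact ⟨a, b + 1, by rwa [pow_succ', ← mul_assoc, mul_assoc (x ^ a)]⟩
  · rintro ⟨a, _ | b, hab⟩
    · refine ⟨a + 1, 0, ?_⟩
      rw [pow_zero, mul_one] at hab ⊢
      rw [pow_succ', mul_assoc x, ← mul_assoc (x ^ a), hab, one_mul, h]
    · exact ⟨a, b, by rwa [pow_succ', ← mul_assoc, mul_assoc (x ^ a)] at hab⟩

theorem IsCancelledBy.y_mul (h : x * y = 1) (hm : IsCancelledBy x y m) :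
    IsCancelledBy x y (y * m) := by
  rwa [← isCancelledBy_x_mul_iff h, ← mul_assoc, h, one_mul]

theorem IsCancelledBy.mul_x (h : x * y = 1) (hm : IsCancelledBy x y m) :
    IsCancelledBy x y (m * x) := by
  rwa [← isCancelledBy_mul_y_iff h, mul_assoc, h, mul_one]

theorem IsCancelledBy.exists_mul_mul_eq_one (hm : IsCancelledBy x y m) :
    ∃ p q : N, p * m * q = 1 :=
  let ⟨a, b, hab⟩ := hm
  ⟨x ^ a, y ^ b, hab⟩

end IsCancelledBy

theorem X_mul_Y : X * Y = 1 :=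
  PresentedMonoid.mk_eq_mk_of_rel (Or.inr (Or.inr (Or.inr ⟨rfl, rfl⟩)))

theorem X_mul_E_mul_Y : X * E * Y = Y :=
  PresentedMonoid.mk_eq_mk_of_rel (Or.inr (Or.inl ⟨rfl, rfl⟩))

theorem X_mul_E_mul_E_mul_Y : X * E * E * Y = X :=
  PresentedMonoid.mk_eq_mk_of_rel (Or.inr (Or.inr (Or.inl ⟨rfl, rfl⟩)))

@[simp]
theorem E_mul_E_mul_E : E * (E * E) = E := by
  rw [← mul_assoc]
  exact PresentedMonoid.mk_eq_mk_of_rel (Or.inl ⟨rfl, rfl⟩)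

@[simp]
theorem X_mul_Y_mul (m : M) : X * (Y * m) = m := by
  rw [← mul_assoc, X_mul_Y, one_mul]

@[simp]
theorem X_mul_E_mul_Y_mul (m : M) : X * (E * (Y * m)) = Y * m := by
  rw [← mul_assoc, ← mul_assoc, X_mul_E_mul_Y]

@[simp]
theorem X_mul_E_mul_E_mul_Y_mul (m : M) : X * (E * (E * (Y * m))) = X * m := by
  rw [← mul_assoc, ← mul_assoc, ← mul_assoc, X_mul_E_mul_E_mul_Y]

@[simp]
theorem E_mul_E_mul_E_mul (m : M) : E * (E * (E * m)) = E * m := by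
  rw [← mul_assoc, ← mul_assoc, mul_assoc E, E_mul_E_mul_E]

section Cancellation

variable {m : M}

theorem IsCancelledBy.E_mul_Y_mul (hm : IsCancelledBy X Y m) :
    IsCancelledBy X Y (E * (Y * m)) := by
  rw [← isCancelledBy_x_mul_iff X_mul_Y, X_mul_E_mul_Y_mul]
  exact hm.y_mul X_mul_Y

theorem IsCancelledBy.E_mul_E_mul_Y_mul (hm : IsCancelledBy X Y m) :
    IsCancelledBy X Y (E * (E * (Y * m))) := by
  rwa [← isCancelledBy_x_mul_iff X_mul_Y, X_mul_E_mul_E_mul_Y_mul,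
    isCancelledBy_x_mul_iff X_mul_Y]

theorem IsCancelledBy.mul_X_mul_E (hm : IsCancelledBy X Y m) :
    IsCancelledBy X Y (m * (X * E)) := by
  rwa [← isCancelledBy_mul_y_iff X_mul_Y, mul_assoc, X_mul_E_mul_Y,
    isCancelledBy_mul_y_iff X_mul_Y]

theorem IsCancelledBy.mul_X_mul_E_mul_E (hm : IsCancelledBy X Y m) :
    IsCancelledBy X Y (m * (X * (E * E))) := by
  rw [← isCancelledBy_mul_y_iff X_mul_Y, mul_assoc, ← mul_assoc X, X_mul_E_mul_E_mul_Y]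
  exact hm.mul_x X_mul_Y

end Cancellation

theorem isCancelledBy_E : IsCancelledBy X Y E :=
  (isCancelledBy_mul_y_iff X_mul_Y).1 (by simpa using isCancelledBy_one.E_mul_Y_mul)

theorem isCancelledBy_E_mul_E : IsCancelledBy X Y (E * E) :=
  (isCancelledBy_mul_y_iff X_mul_Y).1 <| by
    simpa [mul_assoc] using isCancelledBy_one.E_mul_E_mul_Y_mul

def ofWord (w : List Alpha) : M := PresentedMonoid.mk rel (FreeMonoid.ofList w)

theorem ofWord_surjective : Function.Surjective ofWord :=
  PresentedMonoid.surjective_mk.comp FreeMonoid.ofList.surjective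

@[simp]
theorem ofWord_nil : ofWord [] = 1 := map_one _

@[simp]
theorem ofWord_append (v w : List Alpha) : ofWord (v ++ w) = ofWord v * ofWord w := by
  simp [ofWord, FreeMonoid.ofList_append]

@[simp]
theorem ofWord_cons (a : Alpha) (w : List Alpha) :
    ofWord (a :: w) = PresentedMonoid.of rel a * ofWord w := by
  simp [ofWord, FreeMonoid.ofList_cons, PresentedMonoid.of]

@[simp] theorem of_x : PresentedMonoid.of rel .x = X := rfl
@[simp] theorem of_y : PresentedMonoid.of rel .y = Y := rfl
@[simp] theorem of_e : PresentedMonoid.of rel .e = E := rfl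

theorem exists_eq_or_eq_append_y_cons (w : List Alpha) :
    ∃ u t, .y ∉ u ∧ (w = u ∨ w = u ++ .y :: t) := by
  induction w with
  | nil => exact ⟨[], [], by simp, .inl rfl⟩
  | cons a w ih =>
    by_cases ha : a = .y
    · exact ⟨[], w, by simp, .inr (by simp [ha])⟩
    · obtain ⟨u, t, hu, hw⟩ := ih
      exact ⟨a :: u, t, by simp [Ne.symm ha, hu], by rcases hw with rfl | rfl <;> simp⟩

theorem cases_of_y_not_mem {u : List Alpha} (hu : .y ∉ u) :
    u = [] ∨ u = [.e] ∨ u = [.e, .e] ∨ ∃ v, u = v ++ [.x] ∨ u = v ++ [.x, .e] ∨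
      u = v ++ [.x, .e, .e] ∨ u = v ++ [.e, .e, .e] := by
  induction u with
  | nil => simp
  | cons a u ih =>
    simp only [List.mem_cons, not_or] at hu
    rcases ih hu.2 with rfl | rfl | rfl | ⟨v, hv⟩
    iterate 3
      cases a <;> first
        | exact absurd rfl hu.1
        | (simp; done)
        | exact .inr (.inr (.inr ⟨[], by simp⟩))
    exact .inr (.inr (.inr ⟨a :: v, by rcases hv with rfl | rfl | rfl | rfl <;> simp⟩))

theorem isCancelledBy_ofWord (w : List Alpha) : IsCancelledBy X Y (ofWord w) := by
  obtain ⟨u, t, hu, rfl | rfl⟩ := exists_eq_or_eq_append_y_cons w <;>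
    rcases cases_of_y_not_mem hu with rfl | rfl | rfl | ⟨v, rfl | rfl | rfl | rfl⟩
  · exact isCancelledBy_one
  · simpa using isCancelledBy_E
  · simpa using isCancelledBy_E_mul_E
  · simpa using (isCancelledBy_ofWord v).mul_x X_mul_Y
  · simpa using (isCancelledBy_ofWord v).mul_X_mul_E
  · simpa using (isCancelledBy_ofWord v).mul_X_mul_E_mul_E
  · convert isCancelledBy_ofWord (v ++ [.e]) using 1; simp
  · simpa using (isCancelledBy_ofWord t).y_mul X_mul_Y
  · simpa using (isCancelledBy_ofWord t).E_mul_Y_mul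
  · simpa using (isCancelledBy_ofWord t).E_mul_E_mul_Y_mul
  · convert isCancelledBy_ofWord (v ++ t) using 1; simp
  · convert isCancelledBy_ofWord (v ++ .y :: t) using 1; simp
  · convert isCancelledBy_ofWord (v ++ .x :: t) using 1; simp
  · convert isCancelledBy_ofWord (v ++ .e :: .y :: t) using 1; simp
termination_by w.length
decreasing_by all_goals subst_vars; simp <;> omega

theorem exists_mul_mul_eq_one (m : M) : ∃ p q : M, p * m * q = 1 := by
  obtain ⟨w, rfl⟩ := ofWord_surjective m
  exact (isCancelledBy_ofWord w).exists_mul_mul_eq_one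

/-- `M` is simple, and every element of `M` is `J`-related to `1`. -/
theorem stmt_2 :
    (∀ a b : M, ∃ p q : M, p * a * q = b) ∧
    (∀ a : M, {z : M | ∃ p q : M, p * a * q = z} =
              {z : M | ∃ p q : M, p * (1 : M) * q = z}) := by
  have simple (a b : M) : ∃ p q : M, p * a * q = b := by
    obtain ⟨p, q, h⟩ := exists_mul_mul_eq_one a
    exact ⟨p, q * b, by rw [← mul_assoc, h, one_mul]⟩
  exact ⟨simple, fun a => Set.ext fun z =>
    ⟨fun _ => ⟨z, 1, by simp⟩, fun _ => simple a z⟩⟩
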